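/- arXiv:2505.18199 — 4 statements merged into one kernel-verified Lean document; each statement's English description precedes it below -/
import Mathlib

section
/- Let X be a Banach space, Y a dense linear subspace of X, and b : X → ℝⁿ a continuous linear map. Then (ker b) ∩ Y is dense in ker b. -/
set_option synthInstance.maxHeartbeats 1000000
set_option maxHeartbeats 1000000


/-- Let X be a Banach space, Y a dense linear subspace of X, and b : X → ℝⁿ a
continuous linear map. Then (ker b) ∩ Y is dense in ker b. -/
theorem dense_kernel_inter_dense_subspace
    {X : Type*} [NormedAddCommGroup X] [NormedSpace ℝ X] [CompleteSpace X]
    (n : ℕ) (Y : Submodule ℝ X) (hY : Dense (Y : Set X))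
    (b : X →L[ℝ] (Fin n → ℝ)) :
    ∀ x : X, b x = 0 → x ∈ closure {y : X | b y = 0 ∧ y ∈ Y} := by
  -- W = b(Y), a finite-dimensional (hence closed) submodule of ℝⁿ
  set W : Submodule ℝ (Fin n → ℝ) := Submodule.map (b : X →ₗ[ℝ] (Fin n → ℝ)) Y with hWdef
  -- every b z lies in W, since Y is dense and W is closed
  have hW : ∀ z : X, b z ∈ W := by
    intro z
    have hcl : IsClosed (W : Set (Fin n → ℝ)) := Submodule.closed_of_finiteDimensional W
    have : b z ∈ closure (W : Set (Fin n → ℝ)) := by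
      refine map_mem_closure b.continuous (hY z) ?_
      intro y hy
      exact Submodule.mem_map_of_mem hy
    rwa [hcl.closure_eq] at this
  -- restriction of b to Y, valued in W
  let f' : Y →ₗ[ℝ] W :=
    LinearMap.codRestrict W ((b : X →ₗ[ℝ] (Fin n → ℝ)).comp Y.subtype)
      (fun y => Submodule.mem_map_of_mem y.2)
  have hf'surj : LinearMap.range f' = ⊤ := by
    rw [LinearMap.range_eq_top]
    rintro ⟨w, x, hx, rfl⟩
    exact ⟨⟨x, hx⟩, rfl⟩
  obtain ⟨g, hg⟩ := f'.exists_rightInverse_of_surjective hf'surj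
  -- linear section of b with values in Y
  let s : W →ₗ[ℝ] X := Y.subtype.comp g
  have hs1 : ∀ w : W, b (s w) = (w : Fin n → ℝ) := by
    intro w
    have := congrArg (fun h => ((h w : W) : Fin n → ℝ)) hg
    simpa [s, f'] using this
  have hs2 : ∀ w : W, s w ∈ Y := fun w => (g w).2
  have hscont : Continuous s := s.continuous_of_finiteDimensional
  -- correction map
  set F : X → X := fun z => z - s ⟨b z, hW z⟩ with hFdef
  have hFcont : Continuous F :=
    continuous_id.sub (hscont.comp (b.continuous.subtype_mk _))
  intro x hx
  have hFx : F x = x := by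
    have : (⟨b x, hW x⟩ : W) = 0 := Subtype.ext hx
    simp [hFdef, this]
  have hmaps : Set.MapsTo F (Y : Set X) {y : X | b y = 0 ∧ y ∈ Y} := by
    intro y hy
    constructor
    · simp [hFdef, map_sub, hs1]
    · exact Y.sub_mem hy (hs2 _)
  rw [← hFx]
  exact map_mem_closure hFcont (hY x) hmaps
end

section
/- Let f : ℝ → ℝ be a rational function f(t) = p(t)/q(t) with deg p ≤ deg q − 2, where q has no real roots and exactly one pair of conjugate complex roots (each possibly with multiplicity). Then f has a rational antiderivative if and only if ∫_{−∞}^{∞} f(t) dt = 0. -/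
/-!
Write `q = c Q ^ (m + 1)` and `D g = g' Q - m g Q'`, so that `(g / (c Q ^ m))' = D g / q`.
If `a` is the leading coefficient of `Q`, then `D (X ^ n) = (n - 2m) a X ^ (n + 1) + …`, and
`n - 2m ≠ 0` for `n < 2m`; peeling off leading terms, every `p` of degree `≤ 2m` is `D g + μ`
with `μ` constant. So `p / q - μ / q` has the rational antiderivative `g / (c Q ^ m)`.

A rational function whose derivative is integrable has a finite limit at `+∞`, so its numerator
has degree at most that of its denominator, and then the limits at `±∞` agree: its derivative
integrates to `0`. Hence `∫ p / q = μ ∫ 1 / q`, and `∫ 1 / q ≠ 0` because `q` has constant sign.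
-/

open MeasureTheory Polynomial

open Filter Topology Asymptotics

theorem Polynomial.exists_tendsto_div_atTop_and_atBot {P Q : ℝ[X]} (hle : P.degree ≤ Q.degree) :
    ∃ L, Tendsto (fun x => P.eval x / Q.eval x) atTop (𝓝 L) ∧
      Tendsto (fun x => P.eval x / Q.eval x) atBot (𝓝 L) := by
  rcases hle.lt_or_eq with hlt | heq
  · exact ⟨0, div_tendsto_atTop_zero_of_degree_lt P Q hlt,
      div_tendsto_atBot_zero_of_degree_lt P Q hlt⟩
  · exact ⟨_, div_tendsto_atTop_leadingCoeff_div_of_degree_eq P Q heq,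
      div_tendsto_atBot_leadingCoeff_div_of_degree_eq P Q heq⟩

theorem integral_eq_zero_of_hasDerivAt_eval_div_eval {g h : ℝ[X]} {f : ℝ → ℝ}
    (hh : ∀ t, h.eval t ≠ 0) (hd : ∀ t, HasDerivAt (fun s => g.eval s / h.eval s) (f t) t)
    (hf : Integrable f) : ∫ t, f t = 0 := by
  have htop := tendsto_limUnder_of_hasDerivAt_of_integrableOn_Ioi (a := 0) (fun t _ => hd t)
    hf.integrableOn
  have hle : g.degree ≤ h.degree := by
    by_contra! hlt
    have h0 : h ≠ 0 := fun h0 => hh 0 (by simp [h0])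
    exact not_tendsto_nhds_of_tendsto_atTop
      (abs_div_tendsto_atTop_atTop_of_degree_gt g h hlt h0) _ htop.abs
  obtain ⟨L, hLtop, hLbot⟩ := exists_tendsto_div_atTop_and_atBot hle
  rw [integral_of_hasDerivAt_of_tendsto hd hf hLbot hLtop, sub_self]

theorem integrable_eval_div_eval {r s : ℝ[X]} (hs : ∀ t, s.eval t ≠ 0)
    (hdeg : r.natDegree + 2 ≤ s.natDegree) : Integrable fun t => r.eval t / s.eval t := by
  have hs0 : s ≠ 0 := fun h0 => hs 0 (by simp [h0])
  have hP : ((X ^ 2 + 1) * r).degree ≤ s.degree := by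
    rw [degree_eq_natDegree hs0]
    refine degree_le_of_natDegree_le (natDegree_mul_le.trans ?_)
    have : (X ^ 2 + 1 : ℝ[X]).natDegree ≤ 2 := by compute_degree
    omega
  -- multiply `(X ^ 2 + 1) * r = O(s)` by `(s (1 + t ^ 2))⁻¹`
  have hO : ∀ l, ((X ^ 2 + 1) * r).eval =O[l] s.eval →
      (fun t => r.eval t / s.eval t) =O[l] fun t : ℝ => (1 + t ^ 2)⁻¹ := by
    intro l hl
    refine (hl.mul (isBigO_refl (fun t => (s.eval t * (1 + t ^ 2))⁻¹) l)).congr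
      (fun t => ?_) (fun t => ?_)
    · have := hs t
      simp only [eval_mul, eval_add, eval_pow, eval_X, eval_one]
      field_simp
      ring
    · have := hs t
      field_simp
  exact ((Polynomial.continuous r).div (Polynomial.continuous s) hs).locallyIntegrable
    |>.integrable_of_isBigO_atBot_atTop
      (hO _ (isBigO_atBot_of_degree_le _ _ hP)) (integrable_inv_one_add_sq.integrableAtFilter _)
      (hO _ (isBigO_atTop_of_degree_le _ _ hP)) (integrable_inv_one_add_sq.integrableAtFilter _)

theorem integral_ne_zero_of_continuous_of_ne_zero {f : ℝ → ℝ} (hfc : Continuous f)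
    (hf0 : ∀ t, f t ≠ 0) (hfi : Integrable f) : ∫ t, f t ≠ 0 := by
  have hpos : ∀ t, 0 < f 0 * f t := by
    intro t
    by_contra! ht
    obtain ⟨s, hs⟩ := intermediate_value_univ t 0 (continuous_const.mul hfc)
      ⟨ht, (mul_self_pos.2 (hf0 0)).le⟩
    exact mul_ne_zero (hf0 0) (hf0 s) hs
  have := integral_pos_of_integrable_nonneg_nonzero (f := fun t => f 0 * f t) (x := 0)
    (continuous_const.mul hfc) (hfi.const_mul (f 0)) (fun t => (hpos t).le) (hpos 0).ne'
  rw [integral_const_mul] at this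
  exact right_ne_zero_of_mul this.ne'

section

variable {K : Type*} [Field K]

/-- The numerator of `(g / Q ^ m)' = (g' Q - m g Q') / Q ^ (m + 1)`. -/
noncomputable def divPowDerivNum (Q : K[X]) (m : ℕ) (g : K[X]) : K[X] :=
  derivative g * Q - C (m : K) * g * derivative Q

variable (Q : K[X]) (m : ℕ)

theorem coeff_divPowDerivNum_X_pow (n : ℕ) :
    (divPowDerivNum Q m (X ^ n)).coeff (n + 1) = ((n : K) - 2 * m) * Q.coeff 2 := by
  rcases n with _ | n
  · simp only [divPowDerivNum, pow_zero, derivative_one, zero_mul, map_natCast, mul_one, zero_sub,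
      zero_add, coeff_neg, coeff_natCast_mul, coeff_derivative, Nat.cast_zero, Nat.reduceAdd, Nat.cast_one]
    ring
  · have h₁ : (X ^ n * Q).coeff (n + 1 + 1) = Q.coeff 2 := by
      rw [show n + 1 + 1 = 2 + n by ring, coeff_X_pow_mul]
    have h₂ : (X ^ (n + 1) * derivative Q).coeff (n + 1 + 1) = 2 * Q.coeff 2 := by
      rw [show n + 1 + 1 = 1 + (n + 1) by ring, coeff_X_pow_mul, coeff_derivative]
      norm_num [mul_comm]
    simp only [divPowDerivNum, derivative_X_pow, coeff_sub, mul_assoc, coeff_C_mul,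
      Nat.add_sub_cancel, h₁, h₂]
    push_cast
    ring

theorem natDegree_divPowDerivNum_X_pow_le (hQ : Q.natDegree ≤ 2) (n : ℕ) :
    (divPowDerivNum Q m (X ^ n)).natDegree ≤ n + 1 := by
  have hQ' : (derivative Q).natDegree ≤ 1 := (natDegree_derivative_le Q).trans (by omega)
  refine natDegree_sub_le_of_le ?_ (natDegree_mul_le.trans ?_) |>.trans (max_self _).le
  · rcases n with _ | n
    · simp
    · rw [derivative_X_pow]
      have := natDegree_C_mul_X_pow_le ((n + 1 : ℕ) : K) n
      rw [Nat.add_sub_cancel]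
      exact natDegree_mul_le.trans (by omega)
  · have := natDegree_C_mul_X_pow_le ((m : K)) n
    omega

theorem divPowDerivNum_C_mul_add (c : K) (g₀ g : K[X]) :
    divPowDerivNum Q m (C c * g₀ + g) = C c * divPowDerivNum Q m g₀ + divPowDerivNum Q m g := by
  simp only [divPowDerivNum, derivative_add, derivative_C_mul]
  ring

variable [CharZero K]

theorem natDegree_sub_C_mul_divPowDerivNum_X_pow_le (hQ : Q.natDegree = 2) {n : ℕ}
    (hn : n < 2 * m) {p : K[X]} (hp : p.natDegree ≤ n + 1) :
    (p - C (p.coeff (n + 1) / (((n : K) - 2 * m) * Q.coeff 2)) *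
      divPowDerivNum Q m (X ^ n)).natDegree ≤ n := by
  have hnm : (n : K) - 2 * m ≠ 0 := sub_ne_zero.2 (by exact_mod_cast hn.ne)
  have hQ2 : Q.coeff 2 ≠ 0 := by
    rw [← hQ, coeff_natDegree, Ne, leadingCoeff_eq_zero]
    rintro rfl
    simp at hQ
  have hD := natDegree_divPowDerivNum_X_pow_le Q m hQ.le n
  rw [natDegree_le_iff_coeff_eq_zero]
  intro N hN
  rcases (Nat.succ_le_of_lt hN).eq_or_lt with rfl | hN'
  · rw [coeff_sub, coeff_C_mul, coeff_divPowDerivNum_X_pow]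
    field_simp
    ring
  · have hpN : p.coeff N = 0 := coeff_eq_zero_of_natDegree_lt (by omega)
    have hDN : (divPowDerivNum Q m (X ^ n)).coeff N = 0 := coeff_eq_zero_of_natDegree_lt (by omega)
    simp [hpN, hDN]

theorem exists_eq_divPowDerivNum_add_C (hQ : Q.natDegree = 2) {p : K[X]}
    (hp : p.natDegree ≤ 2 * m) : ∃ (g : K[X]) (μ : K), p = divPowDerivNum Q m g + C μ := by
  suffices ∀ n ≤ 2 * m, ∀ p : K[X], p.natDegree ≤ n → ∃ (g : K[X]) (μ : K),
      p = divPowDerivNum Q m g + C μ from this _ hp p le_rfl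
  intro n
  induction n with
  | zero =>
    intro _ p hp
    exact ⟨0, p.coeff 0, by simp [divPowDerivNum, ← eq_C_of_natDegree_le_zero hp]⟩
  | succ n ih =>
    intro hn p hp
    obtain ⟨g, μ, hg⟩ :=
      ih (by omega) _ (natDegree_sub_C_mul_divPowDerivNum_X_pow_le Q m hQ (by omega) hp)
    exact ⟨_ + g, μ, by rw [divPowDerivNum_C_mul_add, add_assoc, ← hg, add_sub_cancel]⟩

end

theorem hasDerivAt_eval_div_C_mul_pow (g Q : ℝ[X]) (m : ℕ) {c t : ℝ} (hc : c ≠ 0)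
    (ht : Q.eval t ≠ 0) :
    HasDerivAt (fun s => g.eval s / (C c * Q ^ m).eval s)
      ((divPowDerivNum Q m g).eval t / (C c * Q ^ (m + 1)).eval t) t := by
  refine ((g.hasDerivAt t).div ((C c * Q ^ m).hasDerivAt t) (by simp [hc, ht])).congr_deriv ?_
  rcases m with _ | m
  · simp only [divPowDerivNum, zero_add, pow_zero, pow_one, mul_one, derivative_C, Nat.cast_zero,
      eval_mul, eval_sub, eval_C, eval_zero, mul_zero, sub_zero, zero_mul]
    field_simp
  · simp only [divPowDerivNum, derivative_C_mul, derivative_pow, eval_mul, eval_sub, eval_C,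
      eval_pow, Nat.add_sub_cancel]
    field_simp
    push_cast
    ring

theorem rational_antiderivative_iff_integral_zero_general
    (p q Q : Polynomial ℝ) (c : ℝ) (k : ℕ)
    (hq : q = Polynomial.C c * Q ^ k)
    (hQdeg : Q.degree = 2)
    (hqroot : ∀ t : ℝ, q.eval t ≠ 0)
    (hdeg : p.natDegree + 2 ≤ q.natDegree) :
    (∃ g h : Polynomial ℝ, (∀ t : ℝ, h.eval t ≠ 0) ∧
        ∀ t : ℝ, HasDerivAt (fun s : ℝ => g.eval s / h.eval s)
          (p.eval t / q.eval t) t) ↔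
      (∫ t : ℝ, p.eval t / q.eval t) = 0 := by
  have hc : c ≠ 0 := by
    rintro rfl
    exact hqroot 0 (by simp [hq])
  have hQ2 : Q.natDegree = 2 := natDegree_eq_of_degree_eq_some hQdeg
  have hqdeg : q.natDegree = 2 * k := by rw [hq, natDegree_C_mul hc, natDegree_pow, hQ2, mul_comm]
  obtain ⟨m, rfl⟩ : ∃ m, k = m + 1 := ⟨k - 1, by omega⟩
  have hQ : ∀ t, Q.eval t ≠ 0 := fun t h0 => hqroot t (by simp [hq, h0])
  have hf := integrable_eval_div_eval hqroot hdeg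
  have hinv : Integrable fun t => (q.eval t)⁻¹ := by
    simpa using integrable_eval_div_eval (r := 1) hqroot (by rw [natDegree_one]; omega)
  refine ⟨fun ⟨g, h, hh, hd⟩ => integral_eq_zero_of_hasDerivAt_eval_div_eval hh hd hf,
    fun hp0 => ?_⟩
  obtain ⟨g, μ, hpg⟩ := exists_eq_divPowDerivNum_add_C Q m hQ2 (p := p) (by omega)
  have hh : ∀ t, (C c * Q ^ m).eval t ≠ 0 := fun t => by simp [hc, hQ t]
  have hG : ∀ t, HasDerivAt (fun s => g.eval s / (C c * Q ^ m).eval s)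
      (p.eval t / q.eval t - μ * (q.eval t)⁻¹) t := fun t => by
    convert hasDerivAt_eval_div_C_mul_pow g Q m hc (hQ t) using 1
    rw [← hq, hpg, eval_add, eval_C]
    ring
  have hμ : μ = 0 := by
    have := integral_eq_zero_of_hasDerivAt_eval_div_eval hh hG (hf.sub (hinv.const_mul μ))
    rw [integral_sub hf (hinv.const_mul μ), integral_const_mul, hp0, zero_sub, neg_eq_zero] at this
    refine (mul_eq_zero.1 this).resolve_right (integral_ne_zero_of_continuous_of_ne_zero ?_ ?_ hinv)
    · exact (Polynomial.continuous q).inv₀ hqroot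
    · exact fun t => inv_ne_zero (hqroot t)
  exact ⟨g, C c * Q ^ m, hh, fun t => by simpa [hμ] using hG t⟩

/-- Let f(t) = p(t)/q(t) be a rational function with deg p ≤ deg q − 2, where
q = c·Q^k has no real roots and exactly one pair of conjugate complex roots
(an irreducible real quadratic Q, possibly with multiplicity).  Then f has a
rational antiderivative iff ∫_{−∞}^{∞} f(t) dt = 0. -/
theorem rational_antiderivative_iff_integral_zero
    (p q Q : Polynomial ℝ) (c : ℝ) (hc : c ≠ 0) (k : ℕ) (hk : 1 ≤ k)
    (hq : q = Polynomial.C c * Q ^ k)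
    (hQdeg : Q.degree = 2) (hQirr : Irreducible Q)
    (hqroot : ∀ t : ℝ, q.eval t ≠ 0)
    (hdeg : p.natDegree + 2 ≤ q.natDegree) :
    (∃ g h : Polynomial ℝ, (∀ t : ℝ, h.eval t ≠ 0) ∧
        ∀ t : ℝ, HasDerivAt (fun s : ℝ => g.eval s / h.eval s)
          (p.eval t / q.eval t) t) ↔
      (∫ t : ℝ, p.eval t / q.eval t) = 0 :=
  rational_antiderivative_iff_integral_zero_general p q Q c k hq hQdeg hqroot hdeg
end

section
/- For the quaternion polynomial A(t) = t³ + (2j + k)t² − (1 + 2i)t − k, the product A(t)·conj(A(t)) equals (t² + 1)³, and A(t)·i·conj(A(t)) = (t⁶ − 7t⁴ + 7t² − 1)i + (2t⁵ − 12t³ + 2t)j + (−4t⁵ + 4t)k. -/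
open Quaternion

/-! Collecting coefficients, `A(t)` is the quaternion with real coordinates
`(t³ - t, -2t, 2t², t² - 1)`. The first identity is then `a * star a = normSq a`, and the second
is the standard formula for the rotation `v ↦ a v ā` applied to `i`. -/

/-- The quaternion unit i. -/
def qI : Quaternion ℝ := ⟨0, 1, 0, 0⟩
/-- The quaternion 2j + k. -/
def q2jk : Quaternion ℝ := ⟨0, 0, 2, 1⟩
/-- The quaternion 1 + 2i. -/
def q12i : Quaternion ℝ := ⟨1, 2, 0, 0⟩
/-- The quaternion unit k. -/
def qK : Quaternion ℝ := ⟨0, 0, 0, 1⟩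
/-- The polynomial A(t) = t³ + (2j + k)t² − (1 + 2i)t − k evaluated at a real t. -/
noncomputable def Aev (t : ℝ) : Quaternion ℝ :=
  ((t : ℝ) : Quaternion ℝ) ^ 3 + q2jk * ((t : ℝ) : Quaternion ℝ) ^ 2 -
    q12i * ((t : ℝ) : Quaternion ℝ) - qK

/-- The first column of the rotation matrix of `a`, scaled by `normSq a`. -/
theorem mul_qI_mul_star (a : ℍ[ℝ]) :
    a * qI * star a =
      ⟨0, a.re ^ 2 + a.imI ^ 2 - a.imJ ^ 2 - a.imK ^ 2, 2 * (a.imI * a.imJ + a.re * a.imK),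
        2 * (a.imI * a.imK - a.re * a.imJ)⟩ := by
  -- `qI` is unfolded only after expanding: its body is typed `ℍ[ℝ,-1,0,-1]`, not `ℍ[ℝ]`, and the
  -- `Quaternion` simp lemmas would no longer match.
  ext <;> simp [re_mul, imI_mul, imJ_mul, imK_mul] <;> simp [qI] <;> ring

section Aev

variable (t : ℝ)

theorem Aev_re : (Aev t).re = t ^ 3 - t := by
  simp [Aev, ← coe_pow, re_mul]
  simp [q2jk, q12i, qK]

theorem Aev_imI : (Aev t).imI = -2 * t := by
  simp [Aev, ← coe_pow, imI_mul]
  simp [q2jk, q12i, qK]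

theorem Aev_imJ : (Aev t).imJ = 2 * t ^ 2 := by
  simp [Aev, ← coe_pow, imJ_mul]
  simp [q2jk, q12i, qK]

theorem Aev_imK : (Aev t).imK = t ^ 2 - 1 := by
  simp [Aev, ← coe_pow, imK_mul]
  simp [q2jk, q12i, qK]

end Aev

/-- For A(t) = t³ + (2j + k)t² − (1 + 2i)t − k ∈ ℍ[t] one has
A(t)·conj(A(t)) = (t² + 1)³ and
A(t)·i·conj(A(t)) = (t⁶ − 7t⁴ + 7t² − 1)i + (2t⁵ − 12t³ + 2t)j + (−4t⁵ + 4t)k. -/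
theorem example_quaternion_polynomial_identities :
    ∀ t : ℝ,
      Aev t * star (Aev t) = (((t ^ 2 + 1) ^ 3 : ℝ) : Quaternion ℝ) ∧
      Aev t * qI * star (Aev t) =
        (⟨0, t ^ 6 - 7 * t ^ 4 + 7 * t ^ 2 - 1,
            2 * t ^ 5 - 12 * t ^ 3 + 2 * t,
            -4 * t ^ 5 + 4 * t⟩ : Quaternion ℝ) := by
  intro t
  constructor
  · rw [self_mul_star, normSq_def', Aev_re, Aev_imI, Aev_imJ, Aev_imK]
    congr 1
    ring
  · rw [mul_qI_mul_star, Aev_re, Aev_imI, Aev_imJ, Aev_imK]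
    congr 1 <;> ring
end

section
/- Let T : ℝ → S² be the tangent indicatrix T(t) = ((t⁶−7t⁴+7t²−1)·i + (2t⁵−12t³+2t)·j + (−4t⁵+4t)·k)/(t²+1)³. Then the origin of ℝ³ is contained in the convex hull of the image of T. -/
/-!
The first coordinate of `T` is even in `t` and the other two are odd, so `T t` and `T (-t)` are
mirror images in the first axis and their midpoint `(T t 0, 0, 0)` lies on that axis. At `t = 3`
it is `(28/125, 0, 0)`, while `T 0 = (-1, 0, 0)`: the segment joining these two points of the
convex hull passes through the origin.
-/

open EuclideanSpace

noncomputable section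

def tangentIndicatrix (t : ℝ) : EuclideanSpace ℝ (Fin 3) :=
  WithLp.toLp 2 ![(t ^ 6 - 7 * t ^ 4 + 7 * t ^ 2 - 1) / (t ^ 2 + 1) ^ 3,
    (2 * t ^ 5 - 12 * t ^ 3 + 2 * t) / (t ^ 2 + 1) ^ 3,
    (-4 * t ^ 5 + 4 * t) / (t ^ 2 + 1) ^ 3]

theorem tangentIndicatrix_zero : tangentIndicatrix 0 = -single 0 1 := by
  ext i
  fin_cases i <;> simp [tangentIndicatrix]

theorem midpoint_tangentIndicatrix_neg (t : ℝ) :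
    midpoint ℝ (tangentIndicatrix t) (tangentIndicatrix (-t)) =
      tangentIndicatrix t 0 • single 0 1 := by
  ext i
  fin_cases i <;> simp [tangentIndicatrix, midpoint_eq_smul_add] <;> ring

theorem tangentIndicatrix_three_fst : tangentIndicatrix 3 0 = 28 / 125 := by
  norm_num [tangentIndicatrix]

end

/-- For the tangent indicatrix
T(t) = ((t⁶−7t⁴+7t²−1), (2t⁵−12t³+2t), (−4t⁵+4t))/(t²+1)³,
the origin of ℝ³ is contained in the convex hull of the image of T. -/
theorem origin_in_convexHull_tangent_indicatrix :
    (0 : EuclideanSpace ℝ (Fin 3)) ∈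
      convexHull ℝ (Set.range (fun t : ℝ =>
        (WithLp.toLp 2 ![(t ^ 6 - 7 * t ^ 4 + 7 * t ^ 2 - 1) / (t ^ 2 + 1) ^ 3,
           (2 * t ^ 5 - 12 * t ^ 3 + 2 * t) / (t ^ 2 + 1) ^ 3,
           (-4 * t ^ 5 + 4 * t) / (t ^ 2 + 1) ^ 3] :
          EuclideanSpace ℝ (Fin 3)))) := by
  change (0 : EuclideanSpace ℝ (Fin 3)) ∈ convexHull ℝ (Set.range tangentIndicatrix)
  have hull := convex_convexHull ℝ (Set.range tangentIndicatrix)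
  have mem_hull (t : ℝ) : tangentIndicatrix t ∈ convexHull ℝ (Set.range tangentIndicatrix) :=
    subset_convexHull ℝ _ ⟨t, rfl⟩
  refine hull.segment_subset (mem_hull 0) (hull.midpoint_mem (mem_hull 3) (mem_hull (-3))) ?_
  rw [mem_segment_iff_sameRay, tangentIndicatrix_zero, midpoint_tangentIndicatrix_neg,
    tangentIndicatrix_three_fst]
  simpa using SameRay.sameRay_nonneg_smul_right (R := ℝ) (single 0 1 : EuclideanSpace ℝ (Fin 3))
    (by norm_num : (0 : ℝ) ≤ 28 / 125)
end
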